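/- The image of C under f_1 is f_1(C) = {(x,y,z) ∈ C : z ≤ 1/2 + (x_1 + ⋯ + x_{p−1})/2}. Consequently, writing E = {(x,y,z) ∈ C : z ≥ 1/2 + (x_1 + ⋯ + x_{p−1})/2}, one has C = f_1(C) ∪ E and f_1(C) ∩ E = {(x,y,z) ∈ C : z = 1/2 + (x_1 + ⋯ + x_{p−1})/2}. -/

import Mathlib

open Set

/-- The set `C = Δ^{p-1} × [0,1]^{q-1} × [0,1] ⊆ ℝ^{p-1} × ℝ^{q-1} × ℝ`. -/
def Cset (p q : ℕ) : Set ((Fin (p - 1) → ℝ) × (Fin (q - 1) → ℝ) × ℝ) :=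
  {v | (∀ i, 0 ≤ v.1 i) ∧ (∑ i, v.1 i) ≤ 1 ∧ (∀ j, v.2.1 j ∈ Icc (0 : ℝ) 1) ∧
    v.2.2 ∈ Icc (0 : ℝ) 1}

/-- The map `f_t(x,y,z) = (x, y, z(1 + (x₁ + ⋯ + x_{p-1} - 1)t/2))`. -/
noncomputable def fmap (p q : ℕ) (t : ℝ)
    (v : (Fin (p - 1) → ℝ) × (Fin (q - 1) → ℝ) × ℝ) :
    (Fin (p - 1) → ℝ) × (Fin (q - 1) → ℝ) × ℝ :=
  (v.1, v.2.1, v.2.2 * (1 + ((∑ i, v.1 i) - 1) * t / 2))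

/-!
On `C` the factor `1 + (∑ xᵢ - 1)/2 = 1/2 + (∑ xᵢ)/2` lies in `[1/2, 1]`, so `f₁` maps each vertical
fibre `{x} × {y} × [0,1]` onto `{x} × {y} × [0, 1/2 + (∑ xᵢ)/2]`. The statements about `E` are then
order bookkeeping.
-/

theorem Set.sep_le_union_sep_ge {α β : Type*} [LinearOrder β] (s : Set α) (f g : α → β) :
    {a ∈ s | f a ≤ g a} ∪ {a ∈ s | g a ≤ f a} = s := by
  ext a
  simp only [mem_union, mem_sep_iff, ← and_or_left, and_iff_left_iff_imp]
  exact fun _ ↦ le_total _ _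

theorem Set.sep_le_inter_sep_ge {α β : Type*} [PartialOrder β] (s : Set α) (f g : α → β) :
    {a ∈ s | f a ≤ g a} ∩ {a ∈ s | g a ≤ f a} = {a ∈ s | f a = g a} := by
  ext a
  simp only [mem_inter_iff, mem_sep_iff, le_antisymm_iff]
  tauto

theorem fmap_one_apply (p q : ℕ) (v : (Fin (p - 1) → ℝ) × (Fin (q - 1) → ℝ) × ℝ) :
    fmap p q 1 v = (v.1, v.2.1, v.2.2 * (1 / 2 + (∑ i, v.1 i) / 2)) := by
  simp only [fmap]
  ring_nf

theorem exists_mem_Icc_mul_eq_iff {c w : ℝ} (hc : 0 ≤ c) :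
    (∃ z ∈ Icc (0 : ℝ) 1, z * c = w) ↔ w ∈ Icc 0 c := by
  rw [← mem_image, image_mul_right_Icc zero_le_one hc, zero_mul, one_mul]

theorem half_add_half_sum_mem_Icc {ι : Type*} [Fintype ι] {x : ι → ℝ} (hx : ∀ i, 0 ≤ x i)
    (hs : ∑ i, x i ≤ 1) : 1 / 2 + (∑ i, x i) / 2 ∈ Icc (0 : ℝ) 1 := by
  have := Finset.sum_nonneg fun i (_ : i ∈ Finset.univ) ↦ hx i
  constructor <;> linarith

theorem image_fmap_one_Cset (p q : ℕ) :
    fmap p q 1 '' Cset p q = {v ∈ Cset p q | v.2.2 ≤ 1 / 2 + (∑ i, v.1 i) / 2} := by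
  ext v
  constructor
  · rintro ⟨⟨x, y, z⟩, ⟨hx, hs, hy, hz⟩, rfl⟩
    have hc := half_add_half_sum_mem_Icc hx hs
    have hw := (exists_mem_Icc_mul_eq_iff hc.1).mp ⟨z, hz, rfl⟩
    rw [fmap_one_apply]
    exact ⟨⟨hx, hs, hy, hw.1, hw.2.trans hc.2⟩, hw.2⟩
  · obtain ⟨x, y, w⟩ := v
    rintro ⟨⟨hx, hs, hy, hw, -⟩, hwc⟩
    have hc := half_add_half_sum_mem_Icc hx hs
    obtain ⟨z, hz, hzw⟩ := (exists_mem_Icc_mul_eq_iff hc.1).mpr ⟨hw, hwc⟩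
    refine ⟨(x, y, z), ⟨hx, hs, hy, hz⟩, ?_⟩
    rw [fmap_one_apply]
    exact Prod.ext rfl (Prod.ext rfl hzw)

theorem fmap_one_image_general (p q : ℕ) :
    (fmap p q 1 '' Cset p q =
      {v ∈ Cset p q | v.2.2 ≤ 1 / 2 + (∑ i, v.1 i) / 2}) ∧
    (Cset p q =
      fmap p q 1 '' Cset p q ∪ {v ∈ Cset p q | 1 / 2 + (∑ i, v.1 i) / 2 ≤ v.2.2}) ∧
    (fmap p q 1 '' Cset p q ∩ {v ∈ Cset p q | 1 / 2 + (∑ i, v.1 i) / 2 ≤ v.2.2} =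
      {v ∈ Cset p q | v.2.2 = 1 / 2 + (∑ i, v.1 i) / 2}) := by
  rw [image_fmap_one_Cset]
  exact ⟨rfl, (sep_le_union_sep_ge _ _ _).symm, sep_le_inter_sep_ge _ _ _⟩

/-- `f₁(C) = {(x,y,z) ∈ C : z ≤ 1/2 + (x₁+⋯+x_{p-1})/2}`; with
`E = {(x,y,z) ∈ C : z ≥ 1/2 + (x₁+⋯+x_{p-1})/2}` we get `C = f₁(C) ∪ E` and
`f₁(C) ∩ E = {(x,y,z) ∈ C : z = 1/2 + (x₁+⋯+x_{p-1})/2}`. -/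
theorem fmap_one_image (p q : ℕ) (hp : 1 ≤ p) (hq : 1 ≤ q) :
    (fmap p q 1 '' Cset p q =
      {v ∈ Cset p q | v.2.2 ≤ 1 / 2 + (∑ i, v.1 i) / 2}) ∧
    (Cset p q =
      fmap p q 1 '' Cset p q ∪ {v ∈ Cset p q | 1 / 2 + (∑ i, v.1 i) / 2 ≤ v.2.2}) ∧
    (fmap p q 1 '' Cset p q ∩ {v ∈ Cset p q | 1 / 2 + (∑ i, v.1 i) / 2 ≤ v.2.2} =
      {v ∈ Cset p q | v.2.2 = 1 / 2 + (∑ i, v.1 i) / 2}) :=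
  fmap_one_image_general p q
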